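/- Let G be a graph of order n in which every vertex has even degree and whose Seidel matrix is singular, and let m be the number of edges of G. Then m ≡ (n-1)/4 (mod 4). -/

import Mathlib

open Matrix

def seidelMatrix {n : ℕ} (G : SimpleGraph (Fin n)) [DecidableRel G.Adj] :
    Matrix (Fin n) (Fin n) ℤ :=
  Matrix.of fun i j => if i = j then 0 else if G.Adj i j then -1 else 1

/-!
A singular integer matrix has a kernel vector `x` with an odd entry. For the Seidel matrix
`S = J - I - 2A`, the equation `S x = 0` reads `x = σ 𝟙 - 2 A x` with `σ = ∑ xᵢ`, so `σ` and all `xᵢ`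
are odd; as every degree is even, `A x` is then even, i.e. `x = σ 𝟙 - 4 c`. Pairing `S x = 0` with
`𝟙` and with `c` gives `σ² (𝟙ᵀ S 𝟙) = 16 (cᵀ S c)`, hence `16 ∣ 𝟙ᵀ S 𝟙 = n (n - 1) - 4 m`. Summing
`x = σ 𝟙 - 4 c` gives `4 ∣ n - 1`, so `16 ∣ (n - 1)²` and therefore `16 ∣ n - 1 - 4 m`.
-/

open Finset

theorem Matrix.exists_mulVec_eq_zero_odd_of_det_eq_zero {ι : Type*} [Fintype ι] [DecidableEq ι]
    {M : Matrix ι ι ℤ} (h : M.det = 0) : ∃ x, M *ᵥ x = 0 ∧ ∃ i, Odd (x i) := by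
  obtain ⟨v, hv0, hv⟩ := exists_mulVec_eq_zero_iff.mpr h
  obtain ⟨i, hi⟩ := Function.ne_iff.mp hv0
  obtain ⟨x, hvx, hx⟩ := extract_gcd v ⟨i, mem_univ i⟩
  refine ⟨x, ?_, ?_⟩
  · have hg : univ.gcd v ≠ 0 := fun h0 => hi (gcd_eq_zero_iff.mp h0 i (mem_univ i))
    rw [show v = univ.gcd v • x from funext fun j => hvx j (mem_univ j), mulVec_smul] at hv
    exact (smul_eq_zero.mp hv).resolve_left hg
  · by_contra! hx_even
    have : (2 : ℤ) ∣ univ.gcd x :=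
      dvd_gcd_iff.mpr fun j _ => (Int.not_odd_iff_even.mp (hx_even j)).two_dvd
    rw [hx] at this
    norm_num at this

theorem Matrix.IsSymm.sq_mul_dotProduct_mulVec_eq {R ι : Type*} [CommRing R] [Fintype ι]
    {S : Matrix ι ι R} (hS : S.IsSymm) {a b : R} {u v : ι → R}
    (h : S *ᵥ (a • u - b • v) = 0) :
    a ^ 2 * (u ⬝ᵥ S *ᵥ u) = b ^ 2 * (v ⬝ᵥ S *ᵥ v) := by
  have hu : u ⬝ᵥ S *ᵥ (a • u - b • v) = 0 := by rw [h, dotProduct_zero]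
  have hv : v ⬝ᵥ S *ᵥ (a • u - b • v) = 0 := by rw [h, dotProduct_zero]
  have hsymm : v ⬝ᵥ S *ᵥ u = u ⬝ᵥ S *ᵥ v := by
    rw [← dotProduct_transpose_mulVec, hS.eq]
  simp only [mulVec_sub, mulVec_smul, dotProduct_sub, dotProduct_smul, smul_eq_mul, hsymm] at hu hv
  linear_combination a * hu + b * hv

theorem SimpleGraph.adjMatrix_mulVec_apply_modEq {V : Type*} [Fintype V] {G : SimpleGraph V}
    [DecidableRel G.Adj] {x : V → ℤ} {a k : ℤ} (hx : ∀ j, x j ≡ a [ZMOD k]) (i : V) :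
    (G.adjMatrix ℤ *ᵥ x) i ≡ G.degree i * a [ZMOD k] := by
  rw [adjMatrix_mulVec_apply]
  refine (Int.ModEq.sum fun j _ => hx j).trans ?_
  simp [card_neighborFinset_eq_degree]

section Seidel

variable {n : ℕ} (G : SimpleGraph (Fin n)) [DecidableRel G.Adj]

theorem seidelMatrix_isSymm : (seidelMatrix G).IsSymm :=
  IsSymm.ext fun i j => by simp [seidelMatrix, eq_comm, G.adj_comm]

theorem seidelMatrix_eq : seidelMatrix G = of (fun _ _ => 1) - 1 - (2 : ℤ) • G.adjMatrix ℤ := by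
  ext i j
  simp only [seidelMatrix, Matrix.sub_apply, Matrix.smul_apply, of_apply, one_apply,
    SimpleGraph.adjMatrix_apply, smul_eq_mul]
  split_ifs <;> simp_all

theorem seidelMatrix_mulVec_apply (x : Fin n → ℤ) (i : Fin n) :
    (seidelMatrix G *ᵥ x) i = ∑ j, x j - x i - 2 * (G.adjMatrix ℤ *ᵥ x) i := by
  rw [seidelMatrix_eq, sub_mulVec, sub_mulVec, smul_mulVec, one_mulVec]
  simp [mulVec, dotProduct]

theorem one_dotProduct_seidelMatrix_mulVec_one :
    1 ⬝ᵥ seidelMatrix G *ᵥ 1 = n * (n - 1) - 4 * #G.edgeFinset := by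
  have hdeg := congrArg (Nat.cast (R := ℤ)) G.sum_degrees_eq_twice_card_edges
  push_cast at hdeg
  simp only [dotProduct, Pi.one_apply, Pi.one_def, seidelMatrix_mulVec_apply, sum_const, card_univ,
    Fintype.card_fin, Int.nsmul_eq_mul, mul_one, SimpleGraph.adjMatrix_mulVec_apply,
    SimpleGraph.card_neighborFinset_eq_degree, one_mul, sum_sub_distrib, ← mul_sum, hdeg]
  ring

theorem exists_eq_sub_four_smul_of_seidelMatrix_mulVec_eq_zero (hG : ∀ v, Even (G.degree v))
    {x : Fin n → ℤ} (hx : seidelMatrix G *ᵥ x = 0) (hodd : ∃ i, Odd (x i)) :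
    Odd (∑ i, x i) ∧ ∃ c : Fin n → ℤ, x = (∑ i, x i) • 1 - (4 : ℤ) • c := by
  set σ := ∑ i, x i
  have hx_eq (i : Fin n) : x i = σ - 2 * (G.adjMatrix ℤ *ᵥ x) i := by
    have := seidelMatrix_mulVec_apply G x i
    rw [hx, Pi.zero_apply] at this
    linarith
  have hσ : Odd σ := by
    obtain ⟨i, hi⟩ := hodd
    rw [show σ = x i + 2 * (G.adjMatrix ℤ *ᵥ x) i by linarith [hx_eq i]]
    exact hi.add_even (even_two_mul _)
  have hx_odd (j : Fin n) : x j ≡ 1 [ZMOD 2] := by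
    rw [hx_eq j]
    exact Int.odd_iff.mp (hσ.sub_even (even_two_mul _))
  have hAx (i : Fin n) : (2 : ℤ) ∣ (G.adjMatrix ℤ *ᵥ x) i := by
    have hdeg : (2 : ℤ) ∣ G.degree i := by exact_mod_cast (hG i).two_dvd
    have := G.adjMatrix_mulVec_apply_modEq hx_odd i
    rw [mul_one] at this
    exact Int.modEq_zero_iff_dvd.mp (this.trans (Int.modEq_zero_iff_dvd.mpr hdeg))
  choose c hc using hAx
  refine ⟨hσ, c, funext fun i => ?_⟩
  simp [hx_eq i, hc i]
  ring

end Seidel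

theorem seidel_singular_even_graph_size {n : ℕ} (G : SimpleGraph (Fin n))
    [DecidableRel G.Adj]
    (heven : ∀ v, Even (G.degree v))
    (hsing : (seidelMatrix G).det = 0) :
    G.edgeFinset.card % 4 = ((n - 1) / 4) % 4 := by
  obtain ⟨x, hx, hodd⟩ := exists_mulVec_eq_zero_odd_of_det_eq_zero hsing
  obtain ⟨hσ, c, hc⟩ := exists_eq_sub_four_smul_of_seidelMatrix_mulVec_eq_zero G heven hx hodd
  set σ := ∑ i, x i
  have hsum : σ * ((n : ℤ) - 1) = 2 ^ 2 * ∑ i, c i := by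
    have : σ = ∑ i, (σ - 4 * c i) := sum_congr rfl fun i _ => by simpa using congrFun hc i
    rw [sum_sub_distrib, ← mul_sum, sum_const, card_univ, Fintype.card_fin, nsmul_eq_mul] at this
    linarith
  have h4 : (2 : ℤ) ^ 2 ∣ (n : ℤ) - 1 :=
    (Int.isCoprime_two_left.mpr hσ).pow_left.dvd_of_dvd_mul_left ⟨_, hsum⟩
  have hquad := (seidelMatrix_isSymm G).sq_mul_dotProduct_mulVec_eq (hc ▸ hx)
  rw [one_dotProduct_seidelMatrix_mulVec_one] at hquad
  have h16 : (2 : ℤ) ^ 4 ∣ n * (n - 1) - 4 * #G.edgeFinset :=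
    (Int.isCoprime_two_left.mpr hσ).pow.dvd_of_dvd_mul_left ⟨_, hquad.trans (by ring)⟩
  have hdiv : (2 : ℤ) ^ 4 ∣ n - 1 - 4 * #G.edgeFinset := by
    rw [show (n : ℤ) - 1 - 4 * #G.edgeFinset
        = (n * (n - 1) - 4 * #G.edgeFinset) - (n - 1) ^ 2 by ring]
    exact dvd_sub h16 (by simpa [← pow_mul] using pow_dvd_pow_of_dvd h4 2)
  omega
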